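/- The 4×4 matrix √CNOT·(σx ⊗ σx)·√CNOT† is not a local operator: there exist no 2×2 complex matrices A and B such that √CNOT·(σx ⊗ σx)·√CNOT† = A ⊗ B. -/
import Mathlib

open Matrix Complex Kronecker

/-- The Pauli X matrix. -/
def pauliX : Matrix (Fin 2) (Fin 2) ℂ := !![0, 1; 1, 0]

/-- √σx := (1/2)·[[1+i, 1−i],[1−i, 1+i]]. -/
noncomputable def sqrtPauliX : Matrix (Fin 2) (Fin 2) ℂ :=
  (1 / 2 : ℂ) • !![1 + I, 1 - I; 1 - I, 1 + I]

/-- √CNOT := |0⟩⟨0| ⊗ I₂ + |1⟩⟨1| ⊗ √σx. -/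
noncomputable def sqrtCNOT : Matrix (Fin 2 × Fin 2) (Fin 2 × Fin 2) ℂ :=
  (!![1, 0; 0, 0] : Matrix (Fin 2) (Fin 2) ℂ) ⊗ₖ (1 : Matrix (Fin 2) (Fin 2) ℂ) +
    (!![0, 0; 0, 1] : Matrix (Fin 2) (Fin 2) ℂ) ⊗ₖ sqrtPauliX

/-- √CNOT·(σx ⊗ σx)·√CNOT† is not a local operator: it is not of the form A ⊗ B. -/
theorem sqrtCNOT_conj_not_local :
    ¬ ∃ A B : Matrix (Fin 2) (Fin 2) ℂ,
      sqrtCNOT * (pauliX ⊗ₖ pauliX) * sqrtCNOTᴴ = A ⊗ₖ B := by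
  rintro ⟨A, B, h⟩
  have e : ∀ p q : Fin 2 × Fin 2,
      (sqrtCNOT * (pauliX ⊗ₖ pauliX) * sqrtCNOTᴴ) p q = A p.1 q.1 * B p.2 q.2 := by
    intro p q; rw [h]; rfl
  have h1 := e (0,0) (1,0)
  have h2 := e (0,0) (1,1)
  have h3 := e (1,0) (0,0)
  have h4 := e (1,0) (0,1)
  simp only [sqrtCNOT, sqrtPauliX, pauliX, Matrix.mul_apply, Matrix.add_apply,
    Matrix.kroneckerMap_apply, Matrix.conjTranspose_apply, Matrix.smul_apply,
    Fintype.sum_prod_type, Fin.sum_univ_two, Matrix.one_apply] at h1 h2 h3 h4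
  norm_num at h1 h2 h3 h4
  have key : ((1+I)/2) * ((1+I)/2) = ((1-I)/2) * ((1-I)/2) := by
    linear_combination (A 1 0 * B 0 1) * h1 + (1/2 * (1+I)) * h4 - (A 1 0 * B 0 0) * h2 - (1/2 * (1-I)) * h3
  simp [Complex.ext_iff] at key
  norm_num at key
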